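/- arXiv:0710.5571 — 3 statements merged into one kernel-verified Lean document; each statement's English description precedes it below -/
import Mathlib

section
/- For all positive integers k, t, s, every k-edge-coloring of the complete graph K_n with n ≥ s^(4kt) contains a monochromatic copy of K_t or a rainbow copy of K_s; that is, M(k,t,s) ≤ s^(4kt). -/
open Finset

/-- The set of colors appearing on the edges inside a vertex set `S`. -/
def colorsOn {V C : Type*} [DecidableEq V] [DecidableEq C]
    (c : Sym2 V → C) (S : Finset V) : Finset C :=
  S.offDiag.image fun p => c s(p.1, p.2)

/-- The edges inside `S` receive pairwise distinct colors (a rainbow copy of `K_{|S|}`). -/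
def IsRainbow {V C : Type*} (c : Sym2 V → C) (S : Finset V) : Prop :=
  ∀ a ∈ S, ∀ b ∈ S, ∀ x ∈ S, ∀ y ∈ S,
    a ≠ b → x ≠ y → s(a, b) ≠ s(x, y) → c s(a, b) ≠ c s(x, y)

/-- All edges inside `S` receive the same color (a monochromatic copy of `K_{|S|}`). -/
def IsMonochromatic {V C : Type*} (c : Sym2 V → C) (S : Finset V) : Prop :=
  ∀ a ∈ S, ∀ b ∈ S, ∀ x ∈ S, ∀ y ∈ S, a ≠ b → x ≠ y → c s(a, b) = c s(x, y)

/-- All edges inside `S` receive the color `i`. -/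
def IsMonoInColor {V C : Type*} (c : Sym2 V → C) (i : C) (S : Finset V) : Prop :=
  ∀ a ∈ S, ∀ b ∈ S, a ≠ b → c s(a, b) = i

/-- `colorDeg c i x` is the degree `d_i(x)` of the vertex `x` in color `i`. -/
def colorDeg {V C : Type*} [Fintype V] [DecidableEq V] [DecidableEq C]
    (c : Sym2 V → C) (i : C) (x : V) : ℕ :=
  (univ.filter fun y => y ≠ x ∧ c s(x, y) = i).card

instance {V C : Type*} [DecidableEq V] [DecidableEq C] (c : Sym2 V → C) (S : Finset V) :
    Decidable (IsRainbow c S) := by unfold IsRainbow; infer_instance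

instance {V C : Type*} [DecidableEq V] [DecidableEq C] (c : Sym2 V → C) (S : Finset V) :
    Decidable (IsMonochromatic c S) := by unfold IsMonochromatic; infer_instance

instance {V C : Type*} [DecidableEq V] [DecidableEq C] (c : Sym2 V → C) (i : C) (S : Finset V) :
    Decidable (IsMonoInColor c i S) := by unfold IsMonoInColor; infer_instance

/-- There is a `k`-edge-coloring of `K_n` with no rainbow `K_t` in which every `K_4`
receives at least three colors (the colorings counted by `g(k,t)`). -/
def GoodColoring (k t n : ℕ) : Prop :=
  ∃ c : Sym2 (Fin n) → Fin k,
    (∀ S : Finset (Fin n), S.card = t → ¬ IsRainbow c S) ∧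
    (∀ S : Finset (Fin n), S.card = 4 → 3 ≤ (colorsOn c S).card)

/-!
Induct on a vector of targets `m : C → ℕ` for the color classes, keeping a vertex set `W` with
`#W ≥ s ^ (4 ∑ m)`. If some `v ∈ W` has at least `s ^ (4 (∑ m - 1))` neighbours of color `i`
in `W`, recurse into that neighbourhood with `m i` lowered by one: a color-`i` clique found
there extends by `v`. Otherwise every color degree inside `W` is at most `E`, where
`E + 1 = s ^ (4 (∑ m - 1))`, while `#W ≥ s⁴ (E + 1)`, and a rainbow `K_s` is built greedily.
One keeps a rainbow set `R` and the set of vertices extending it to a rainbow set. The next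
vertex `v` is chosen, by double counting, with few `w` such that `c(wv) = c(wa)` for some
`a ∈ R`; every other extender `w` lost by adding `v` has `c(wv)` among the colors of `R + v` or
`c(wa) = c(vb)` with `a, b ∈ R`, so each step loses at most `1 + 3 s² E` extenders.
Taking `m ≡ t - 1` gives the theorem.
-/

theorem mul_lt_pow_four_mul {r s : ℕ} (h : r < s) (E : ℕ) :
    r * (1 + 3 * s ^ 2 * E) < s ^ 4 * (E + 1) := by
  have h₁ : 3 * r ≤ s ^ 2 := by
    rcases Nat.lt_or_ge s 3 with hs | hs
    · interval_cases s <;> omega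
    · nlinarith
  calc r * (1 + 3 * s ^ 2 * E) = r + 3 * r * s ^ 2 * E := by ring
    _ < s ^ 4 + s ^ 2 * s ^ 2 * E :=
      add_lt_add_of_lt_of_le (h.trans_le (Nat.le_self_pow (by norm_num) s)) (by gcongr)
    _ = s ^ 4 * (E + 1) := by ring

theorem sum_update_pred {ι : Type*} [Fintype ι] [DecidableEq ι] (m : ι → ℕ) {i : ι}
    (hi : m i ≠ 0) : ∑ j, Function.update m i (m i - 1) j + 1 = ∑ j, m j := by
  rw [sum_update_of_mem (mem_univ i), ← add_sum_erase _ _ (mem_univ i), sdiff_singleton_eq_erase]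
  omega

section

variable {V C : Type*} (c : Sym2 V → C)

theorem isRainbow_empty : IsRainbow c ∅ := by
  simp [IsRainbow]

theorem isRainbow_insert [DecidableEq V] {a : V} {S : Finset V} (ha : a ∉ S) :
    IsRainbow c (insert a S) ↔ IsRainbow c S ∧
      (∀ x ∈ S, ∀ y ∈ S, ∀ z ∈ S, y ≠ z → c s(a, x) ≠ c s(y, z)) ∧
      (∀ x ∈ S, ∀ y ∈ S, x ≠ y → c s(a, x) ≠ c s(a, y)) := by
  have hne : ∀ x ∈ S, a ≠ x := fun x hx h => ha (h ▸ hx)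
  constructor
  · intro h
    refine ⟨fun p hp q hq x hx y hy => h p (mem_insert_of_mem hp) q (mem_insert_of_mem hq)
      x (mem_insert_of_mem hx) y (mem_insert_of_mem hy), ?_, ?_⟩
    · intro x hx y hy z hz hyz
      refine h a (mem_insert_self a S) x (mem_insert_of_mem hx) y (mem_insert_of_mem hy) z
        (mem_insert_of_mem hz) (hne x hx) hyz ?_
      simp [hne y hy, hne z hz]
    · intro x hx y hy hxy
      refine h a (mem_insert_self a S) x (mem_insert_of_mem hx) a (mem_insert_self a S) y
        (mem_insert_of_mem hy) (hne x hx) (hne y hy) ?_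
      simp [hxy, hne y hy]
  · rintro ⟨hS, hB, hC⟩ p hp q hq x hx y hy hpq hxy hpqxy
    simp only [mem_insert] at hp hq hx hy
    rcases hp with rfl | hp <;> rcases hq with rfl | hq <;> rcases hx with rfl | hx <;>
      rcases hy with rfl | hy
    all_goals first
      | exact hS p hp q hq x hx y hy hpq hxy hpqxy
      | grind [Sym2.eq_swap]

theorem isRainbow_singleton [DecidableEq V] (a : V) : IsRainbow c {a} :=
  (isRainbow_insert c (notMem_empty a)).2 ⟨isRainbow_empty c, by simp, by simp⟩

theorem card_colorsOn_le [DecidableEq V] [DecidableEq C] (S : Finset V) :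
    #(colorsOn c S) ≤ #S ^ 2 :=
  calc #(colorsOn c S) ≤ #S.offDiag := card_image_le
    _ ≤ #S ^ 2 := by rw [offDiag_card, sq]; exact Nat.sub_le _ _

theorem mem_colorsOn [DecidableEq V] [DecidableEq C] {S : Finset V} {x y : V} (hx : x ∈ S)
    (hy : y ∈ S) (hxy : x ≠ y) : c s(x, y) ∈ colorsOn c S :=
  mem_image.2 ⟨(x, y), mem_offDiag.2 ⟨hx, hy, hxy⟩, rfl⟩

theorem conflict_of_not_isRainbow_insert_insert [DecidableEq V] [DecidableEq C]
    {c : Sym2 V → C} {R : Finset V} {v w : V} (hvR : v ∉ R) (hwR : w ∉ R) (hwv : w ≠ v)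
    (hv : IsRainbow c (insert v R)) (hw : IsRainbow c (insert w R))
    (hvw : ¬ IsRainbow c (insert w (insert v R))) :
    c s(w, v) ∈ colorsOn c (insert v R) ∨ (∃ a ∈ R, c s(w, v) = c s(w, a)) ∨
      ∃ a ∈ R, ∃ b ∈ R, c s(w, a) = c s(v, b) := by
  obtain ⟨-, hwR₁, hwR₂⟩ := (isRainbow_insert c hwR).1 hw
  have hw' : w ∉ insert v R := by simp [hwv, hwR]
  simp only [isRainbow_insert c hw', hv, true_and, not_and_or, not_forall, not_not] at hvw
  -- a repeated color involves an edge at `w`; repeats inside `R + w` are excluded by `hw`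
  rcases hvw with ⟨x, hx, y, hy, z, hz, hyz, hc⟩ | ⟨x, hx, y, hy, hxy, hc⟩
  · rcases mem_insert.1 hx with rfl | hxR
    · exact Or.inl (hc ▸ mem_colorsOn c hy hz hyz)
    rcases mem_insert.1 hy with rfl | hyR <;> rcases mem_insert.1 hz with rfl | hzR
    · exact absurd rfl hyz
    · exact Or.inr (Or.inr ⟨x, hxR, z, hzR, hc⟩)
    · exact Or.inr (Or.inr ⟨x, hxR, y, hyR, hc.trans (congrArg c Sym2.eq_swap)⟩)
    · exact absurd hc (hwR₁ x hxR y hyR z hzR hyz)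
  · rcases mem_insert.1 hx with rfl | hxR <;> rcases mem_insert.1 hy with rfl | hyR
    · exact absurd rfl hxy
    · exact Or.inr (Or.inl ⟨y, hyR, hc⟩)
    · exact Or.inr (Or.inl ⟨x, hxR, hc.symm⟩)
    · exact absurd hc (hwR₂ x hxR y hyR hxy)

theorem isMonoInColor_singleton (i : C) (v : V) : IsMonoInColor c i {v} := by
  intro a ha b hb hab
  rw [mem_singleton] at ha hb
  exact absurd (ha.trans hb.symm) hab

theorem IsMonoInColor.insert [DecidableEq V] {c : Sym2 V → C} {i : C} {T : Finset V} {v : V}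
    (hT : IsMonoInColor c i T) (hv : ∀ y ∈ T, y ≠ v → c s(v, y) = i) :
    IsMonoInColor c i (insert v T) := by
  intro a ha b hb hab
  rcases mem_insert.1 ha with rfl | haT <;> rcases mem_insert.1 hb with rfl | hbT
  · exact absurd rfl hab
  · exact hv b hbT (Ne.symm hab)
  · exact (congrArg c Sym2.eq_swap).trans (hv a haT hab)
  · exact hT a haT b hbT hab

theorem IsMonoInColor.isMonochromatic {c : Sym2 V → C} {i : C} {T : Finset V}
    (hT : IsMonoInColor c i T) : IsMonochromatic c T := by
  intro a ha b hb x hx y hy hab hxy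
  rw [hT a ha b hb hab, hT x hx y hy hxy]

variable [DecidableEq V] [DecidableEq C]

def colorNbhd (i : C) (W : Finset V) (v : V) : Finset V := {y ∈ W | y ≠ v ∧ c s(v, y) = i}

def rainbowExtenders (W R : Finset V) : Finset V := {w ∈ W \ R | IsRainbow c (insert w R)}

theorem mem_rainbowExtenders {W R : Finset V} {w : V} :
    w ∈ rainbowExtenders c W R ↔ (w ∈ W ∧ w ∉ R) ∧ IsRainbow c (insert w R) := by
  simp [rainbowExtenders]

section BoundedColorDegree

variable {c} {E : ℕ} {W : Finset V} (hE : ∀ v ∈ W, ∀ i, #(colorNbhd c i W v) ≤ E)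
include hE

/-- For fixed `w` and `a ∈ R`, at most `E` vertices `v` satisfy `c(wv) = c(wa)`, so double
counting the conflicting pairs gives a `v` with few of them. -/
theorem exists_card_conflicts_le {X : Finset V} (hXW : X ⊆ W) (hX : X.Nonempty) (R : Finset V) :
    ∃ v ∈ X, #{w ∈ X | w ≠ v ∧ ∃ a ∈ R, c s(w, v) = c s(w, a)} ≤ #R * E := by
  let conflict : V → V → Prop := fun v w => w ≠ v ∧ ∃ a ∈ R, c s(w, v) = c s(w, a)
  refine exists_le_of_sum_le hX ?_
  calc ∑ v ∈ X, #(X.bipartiteAbove conflict v)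
      = ∑ w ∈ X, #(X.bipartiteBelow conflict w) :=
        sum_card_bipartiteAbove_eq_sum_card_bipartiteBelow _
    _ ≤ ∑ w ∈ X, #R * E := sum_le_sum fun w hw => by
        refine (card_le_card fun v hv => ?_).trans (card_biUnion_le_card_mul R
          (fun a => colorNbhd c (c s(w, a)) W w) E fun a _ => hE w (hXW hw) _)
        obtain ⟨hvX, hwv, a, ha, hc⟩ := (mem_bipartiteBelow conflict).1 hv
        exact mem_biUnion.2 ⟨a, ha, mem_filter.2 ⟨hXW hvX, hwv.symm, hc⟩⟩

theorem exists_card_rainbowExtenders_le {R : Finset V} (hRW : R ⊆ W)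
    (hX : (rainbowExtenders c W R).Nonempty) :
    ∃ v ∈ rainbowExtenders c W R, #(rainbowExtenders c W R) ≤
      #(rainbowExtenders c W (insert v R)) + 1 + 3 * (#R + 1) ^ 2 * E := by
  set X := rainbowExtenders c W R
  have hXW : X ⊆ W := fun w hw => ((mem_rainbowExtenders c).1 hw).1.1
  obtain ⟨v, hvX, hB₂⟩ := exists_card_conflicts_le hE hXW hX R
  obtain ⟨⟨hvW, hvR⟩, hv⟩ := (mem_rainbowExtenders c).1 hvX
  refine ⟨v, hvX, ?_⟩
  set B₁ := (colorsOn c (insert v R)).biUnion fun i => colorNbhd c i W v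
  set B₂ := {w ∈ X | w ≠ v ∧ ∃ a ∈ R, c s(w, v) = c s(w, a)}
  set B₃ := R.biUnion fun a => R.biUnion fun b => colorNbhd c (c s(v, b)) W a
  have hcover : X.erase v ⊆ rainbowExtenders c W (insert v R) ∪ (B₁ ∪ B₂ ∪ B₃) := by
    intro w hw
    obtain ⟨hwv, hwX⟩ := mem_erase.1 hw
    obtain ⟨⟨hwW, hwR⟩, hwRb⟩ := (mem_rainbowExtenders c).1 hwX
    by_cases hvw : IsRainbow c (insert w (insert v R))
    · exact mem_union_left _ ((mem_rainbowExtenders c).2 ⟨⟨hwW, by simp [hwv, hwR]⟩, hvw⟩)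
    refine mem_union_right _ ?_
    rcases conflict_of_not_isRainbow_insert_insert hvR hwR hwv hv hwRb hvw with
      h₁ | h₂ | ⟨a, ha, b, hb, h₃⟩
    · refine mem_union_left _ (mem_union_left _ (mem_biUnion.2 ⟨_, h₁, ?_⟩))
      exact mem_filter.2 ⟨hwW, hwv, congrArg c Sym2.eq_swap⟩
    · exact mem_union_left _ (mem_union_right _ (mem_filter.2 ⟨hwX, hwv, h₂⟩))
    · refine mem_union_right _ (mem_biUnion.2 ⟨a, ha, mem_biUnion.2 ⟨b, hb, ?_⟩⟩)
      exact mem_filter.2 ⟨hwW, fun h => hwR (h ▸ ha), (congrArg c Sym2.eq_swap).trans h₃⟩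
  have hB₁ : #B₁ ≤ (#R + 1) ^ 2 * E := by
    refine (card_biUnion_le_card_mul _ _ _ fun i _ => hE v hvW i).trans ?_
    rw [← card_insert_of_notMem hvR]
    exact Nat.mul_le_mul_right _ (card_colorsOn_le c _)
  have hB₃ : #B₃ ≤ #R * (#R * E) :=
    card_biUnion_le_card_mul _ _ _ fun a ha =>
      card_biUnion_le_card_mul _ _ _ fun b _ => hE a (hRW ha) _
  calc #X = #(X.erase v) + 1 := (card_erase_add_one hvX).symm
    _ ≤ #(rainbowExtenders c W (insert v R)) + (#B₁ + #B₂ + #B₃) + 1 := by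
      have := card_le_card hcover
      have := card_union_le (rainbowExtenders c W (insert v R)) (B₁ ∪ B₂ ∪ B₃)
      have := card_union_le (B₁ ∪ B₂) B₃
      have := card_union_le B₁ B₂
      omega
    _ ≤ _ := by nlinarith

theorem exists_isRainbow_of_card_colorNbhd_le {s : ℕ} (hW : s ^ 4 * (E + 1) ≤ #W) :
    ∃ S ⊆ W, #S = s ∧ IsRainbow c S := by
  suffices ∀ r ≤ s, ∃ R ⊆ W, #R = r ∧ IsRainbow c R ∧
      #W ≤ #(rainbowExtenders c W R) + r * (1 + 3 * s ^ 2 * E) by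
    obtain ⟨R, hRW, hR, hRr, -⟩ := this s le_rfl
    exact ⟨R, hRW, hR, hRr⟩
  intro r hr
  induction r with
  | zero =>
    refine ⟨∅, empty_subset W, card_empty, isRainbow_empty c, ?_⟩
    simp [rainbowExtenders, isRainbow_singleton]
  | succ r ih =>
    obtain ⟨R, hRW, rfl, -, hinv⟩ := ih (by omega)
    have hX : (rainbowExtenders c W R).Nonempty := by
      have := mul_lt_pow_four_mul (Nat.lt_of_succ_le hr) E
      rw [← card_pos]
      omega
    obtain ⟨v, hvX, hstep⟩ := exists_card_rainbowExtenders_le hE hRW hX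
    obtain ⟨⟨hvW, hvR⟩, hv⟩ := (mem_rainbowExtenders c).1 hvX
    refine ⟨insert v R, insert_subset hvW hRW, card_insert_of_notMem hvR, hv, ?_⟩
    have hRs : (#R + 1) ^ 2 ≤ s ^ 2 := Nat.pow_le_pow_left hr 2
    nlinarith

end BoundedColorDegree

def HasMonoCliqueOrRainbow [Fintype C] (m : C → ℕ) (s : ℕ) (W : Finset V) : Prop :=
  (∃ i, ∃ T ⊆ W, #T = m i + 1 ∧ IsMonoInColor c i T) ∨ ∃ S ⊆ W, #S = s ∧ IsRainbow c S

variable {c} in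
theorem HasMonoCliqueOrRainbow.of_colorNbhd [Fintype C] {m : C → ℕ} {s : ℕ} {W : Finset V}
    {i : C} {v : V} (hv : v ∈ W) (hmi : m i ≠ 0)
    (h : HasMonoCliqueOrRainbow c (Function.update m i (m i - 1)) s (colorNbhd c i W v)) :
    HasMonoCliqueOrRainbow c m s W := by
  have hNW : colorNbhd c i W v ⊆ W := filter_subset _ _
  rcases h with ⟨j, T, hT, hTcard, hTmono⟩ | ⟨S, hS, hScard, hSrb⟩
  · by_cases hji : j = i
    · subst hji
      have hvT : v ∉ T := fun h => (mem_filter.1 (hT h)).2.1 rfl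
      refine Or.inl ⟨j, insert v T, insert_subset hv (hT.trans hNW), ?_, hTmono.insert ?_⟩
      · rw [card_insert_of_notMem hvT, hTcard, Function.update_self]
        omega
      · exact fun y hy _ => (mem_filter.1 (hT hy)).2.2
    · exact Or.inl ⟨j, T, hT.trans hNW, by rwa [Function.update_of_ne hji] at hTcard, hTmono⟩
  · exact Or.inr ⟨S, hS.trans hNW, hScard, hSrb⟩

theorem hasMonoCliqueOrRainbow [Fintype C] (m : C → ℕ) (s : ℕ) (W : Finset V)
    (hW : s ^ (4 * ∑ i, m i) ≤ #W) : HasMonoCliqueOrRainbow c m s W := by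
  rcases Nat.eq_zero_or_pos s with rfl | hs
  · exact Or.inr ⟨∅, empty_subset W, card_empty, isRainbow_empty c⟩
  induction h : ∑ i, m i generalizing m W with
  | zero =>
    obtain ⟨v, hv⟩ : W.Nonempty := card_pos.1 (by simpa [h] using hW)
    -- all targets are `0`, so any color will do, e.g. that of the loop `s(v, v)`
    refine Or.inl ⟨c s(v, v), {v}, singleton_subset_iff.2 hv, ?_, isMonoInColor_singleton c _ v⟩
    simp [(sum_eq_zero_iff.1 h) _ (mem_univ _)]
  | succ N ih =>
    by_cases hbig : ∃ v ∈ W, ∃ i, s ^ (4 * N) ≤ #(colorNbhd c i W v)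
    · obtain ⟨v, hv, i, hi⟩ := hbig
      by_cases hmi : m i = 0
      · exact Or.inl ⟨i, {v}, singleton_subset_iff.2 hv, by simp [hmi],
          isMonoInColor_singleton c i v⟩
      have hsum : ∑ j, Function.update m i (m i - 1) j = N := by
        have := sum_update_pred m hmi
        omega
      exact .of_colorNbhd hv hmi (ih _ _ (hsum ▸ hi) hsum)
    · push Not at hbig
      have hpos : 0 < s ^ (4 * N) := pow_pos hs _
      refine Or.inr (exists_isRainbow_of_card_colorNbhd_le (E := s ^ (4 * N) - 1)
        (fun v hv i => by have := hbig v hv i; omega) ?_)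
      calc s ^ 4 * (s ^ (4 * N) - 1 + 1) = s ^ (4 * (N + 1)) := by
            rw [Nat.sub_add_cancel hpos, ← pow_add]; ring_nf
        _ ≤ #W := h ▸ hW

end

theorem mono_or_rainbow_general
    (k t s n : ℕ)
    (hn : s ^ (4 * k * t) ≤ n) (c : Sym2 (Fin n) → Fin k) :
    (∃ S : Finset (Fin n), S.card = t ∧ IsMonochromatic c S) ∨
    (∃ S : Finset (Fin n), S.card = s ∧ IsRainbow c S) := by
  rcases Nat.eq_zero_or_pos t with rfl | ht
  · exact Or.inl ⟨∅, card_empty, by simp [IsMonochromatic]⟩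
  rcases Nat.eq_zero_or_pos s with rfl | hs
  · exact Or.inr ⟨∅, card_empty, isRainbow_empty c⟩
  have hW : s ^ (4 * ∑ _i : Fin k, (t - 1)) ≤ #(univ : Finset (Fin n)) := by
    rw [sum_const, card_univ, card_univ, Fintype.card_fin, Fintype.card_fin, smul_eq_mul]
    refine (Nat.pow_le_pow_right hs ?_).trans hn
    rw [← mul_assoc]
    exact Nat.mul_le_mul_left _ (Nat.sub_le t 1)
  rcases hasMonoCliqueOrRainbow c (fun _ => t - 1) s univ hW with
    ⟨i, T, -, hT, hmono⟩ | ⟨S, -, hS, hrb⟩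
  · exact Or.inl ⟨T, by simp only at hT; omega, hmono.isMonochromatic⟩
  · exact Or.inr ⟨S, hS, hrb⟩

/-- **Proposition 7.** For all positive integers `k, t, s`, every `k`-edge-coloring of
`K_n` with `n ≥ s^(4kt)` contains a monochromatic `K_t` or a rainbow `K_s`; that is,
`M(k,t,s) ≤ s^(4kt)`. -/
theorem mono_or_rainbow
    (k t s n : ℕ) (hk : 0 < k) (ht : 0 < t) (hs : 0 < s)
    (hn : s ^ (4 * k * t) ≤ n) (c : Sym2 (Fin n) → Fin k) :
    (∃ S : Finset (Fin n), S.card = t ∧ IsMonochromatic c S) ∨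
    (∃ S : Finset (Fin n), S.card = s ∧ IsRainbow c S) :=
  mono_or_rainbow_general k t s n hn c
end

section
/- For all integers k ≥ 2 and t ≥ 3, M(k,t,3) − 1 ≥ 2^(t/2) · (M(k−2,t,3) − 1). More precisely, given a 2-edge-coloring of K_m with m = 2^(t/2) and no monochromatic K_t, and a (k−2)-edge-coloring of K_r with r = M(k−2,t,3) − 1 having no rainbow triangle and no monochromatic K_t, the product (blow-up) coloring of K_{mr} — partition the vertices into m blocks of size r, color edges between blocks i ≠ j by the 2-coloring's color of (i,j) using 2 new colors, and color edges within each block by the (k−2)-coloring — is a k-edge-coloring of K_{mr} with no rainbow triangle and no monochromatic K_t. -/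
/-!
The blow-up of a coloring with no monochromatic `K_t` and no rainbow triangle by another such
coloring is again such a coloring. Edges inside blocks and edges between blocks get disjoint color
sets, so a monochromatic `K_t` either lies in one block or meets every block at most once, and
projects to a monochromatic `K_t` of one of the factors. A triangle lies in one block, meets three
blocks, or has two vertices in one block, whose edges to the third vertex then share a color.

Erdős' counting argument gives a `2`-coloring of `K_m` without monochromatic `K_t` as soon as
`2 (m choose t) < 2^(t choose 2)`, which holds for `m = 2^(t/2)` (even `t`) and
`m = 3·2^((t-3)/2)` (odd `t`); in both cases `m ≥ 2^(t/2)`. A `2`-coloring has no rainbow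
triangle, so its blow-up by a `(k-2)`-coloring of `K_{M(k-2,t,3)-1}` with neither pattern is a
`k`-coloring of `K_{m (M(k-2,t,3)-1)}` with neither pattern.
-/

open Finset

def MonoCliqueFree {V C : Type*} (c : Sym2 V → C) (t : ℕ) : Prop :=
  ∀ S : Finset V, S.card = t → ¬ IsMonochromatic c S

def IsGallaiColoring {V C : Type*} (c : Sym2 V → C) : Prop :=
  ∀ S : Finset V, S.card = 3 → ¬ IsRainbow c S

section Image

variable {V W C D : Type*} [DecidableEq W] {c : Sym2 V → C} {c' : Sym2 W → D} {j : D → C}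
  {f : V → W} {S : Finset V}

theorem IsRainbow.image
    (hc : ∀ a ∈ S, ∀ b ∈ S, a ≠ b → c s(a, b) = j (c' s(f a, f b)))
    (h : IsRainbow c S) : IsRainbow c' (S.image f) := by
  simp only [IsRainbow, mem_image, forall_exists_index, and_imp]
  rintro _ a ha rfl _ b hb rfl _ x hx rfl _ y hy rfl hab hxy hne heq
  have hab' : a ≠ b := ne_of_apply_ne f hab
  have hxy' : x ≠ y := ne_of_apply_ne f hxy
  refine h a ha b hb x hx y hy hab' hxy'
    (fun h' => hne (by simpa using congrArg (Sym2.map f) h')) ?_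
  rw [hc a ha b hb hab', hc x hx y hy hxy', heq]

theorem IsMonochromatic.image (hj : Function.Injective j)
    (hc : ∀ a ∈ S, ∀ b ∈ S, a ≠ b → c s(a, b) = j (c' s(f a, f b)))
    (h : IsMonochromatic c S) : IsMonochromatic c' (S.image f) := by
  simp only [IsMonochromatic, mem_image, forall_exists_index, and_imp]
  rintro _ a ha rfl _ b hb rfl _ x hx rfl _ y hy rfl hab hxy
  have hab' : a ≠ b := ne_of_apply_ne f hab
  have hxy' : x ≠ y := ne_of_apply_ne f hxy
  apply hj
  rw [← hc a ha b hb hab', ← hc x hx y hy hxy']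
  exact h a ha b hb x hx y hy hab' hxy'

end Image

theorem IsRainbow.apply_ne {V C : Type*} {c : Sym2 V → C} {S : Finset V} (h : IsRainbow c S)
    {a b d : V} (ha : a ∈ S) (hb : b ∈ S) (hd : d ∈ S) (hab : a ≠ b) (had : a ≠ d)
    (hbd : b ≠ d) : c s(a, d) ≠ c s(b, d) :=
  h a ha d hd b hb d hd had hbd (by simp [hab, had])

section Embedding

variable {V W C D : Type*} [DecidableEq W] {c : Sym2 W → C} (f : V ↪ W) (j : C ↪ D)

theorem MonoCliqueFree.comap {t : ℕ} (h : MonoCliqueFree c t) :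
    MonoCliqueFree (fun e => j (c (e.map f))) t := fun S hS hM =>
  h (S.image f) (by rw [card_image_of_injective S f.injective, hS])
    (hM.image j.injective fun _ _ _ _ _ => rfl)

theorem IsGallaiColoring.comap (h : IsGallaiColoring c) :
    IsGallaiColoring (fun e => j (c (e.map f))) := fun S hS hR =>
  h (S.image f) (by rw [card_image_of_injective S f.injective, hS])
    (hR.image (j := j) fun _ _ _ _ _ => rfl)

end Embedding

theorem isGallaiColoring_of_card_le_two {V C : Type*} [Fintype C] (hC : Fintype.card C ≤ 2)
    (c : Sym2 V → C) : IsGallaiColoring c := by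
  classical
  intro S hS hR
  obtain ⟨a, b, d, hab, had, hbd, rfl⟩ := card_eq_three.mp hS
  have h₁ : c s(a, b) ≠ c s(a, d) := by
    simpa only [Sym2.eq_swap] using
      hR.apply_ne (by simp) (by simp) (by simp) hbd hab.symm had.symm
  have h₂ : c s(a, b) ≠ c s(b, d) := by
    simpa only [Sym2.eq_swap (a := d)] using
      hR.apply_ne (by simp) (by simp) (by simp) had hab hbd.symm
  have h₃ : c s(a, d) ≠ c s(b, d) := hR.apply_ne (by simp) (by simp) (by simp) hab had hbd
  have := Fintype.card_le_of_injective ![c s(a, b), c s(a, d), c s(b, d)] (by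
    intro i i'
    fin_cases i <;> fin_cases i' <;> simp [h₁, h₂, h₃, h₁.symm, h₂.symm, h₃.symm])
  rw [Fintype.card_fin] at this
  omega

theorem Finset.card_image_snd_of_forall_fst_eq {V W : Type*} [DecidableEq W] {S : Finset (V × W)}
    (hS : ∀ a ∈ S, ∀ b ∈ S, a.1 = b.1) : (S.image Prod.snd).card = S.card :=
  card_image_of_injOn fun a ha b hb h => Prod.ext (hS a ha b hb) h

section BlowUp

variable {V W C₁ C₂ : Type*} [DecidableEq V]

def IsBlowUp (c₁ : Sym2 V → C₁) (c₂ : Sym2 W → C₂) (c : Sym2 (V × W) → C₁ ⊕ C₂) : Prop :=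
  ∀ p q : V × W, p ≠ q →
    c s(p, q) = if p.1 = q.1 then Sum.inr (c₂ s(p.2, q.2)) else Sum.inl (c₁ s(p.1, q.1))

def blowUp (c₁ : Sym2 V → C₁) (c₂ : Sym2 W → C₂) : Sym2 (V × W) → C₁ ⊕ C₂ :=
  Sym2.lift ⟨fun p q => if p.1 = q.1 then Sum.inr (c₂ s(p.2, q.2)) else Sum.inl (c₁ s(p.1, q.1)),
    fun p q => by simp only [eq_comm (a := p.1), Sym2.eq_swap]⟩

theorem isBlowUp_blowUp (c₁ : Sym2 V → C₁) (c₂ : Sym2 W → C₂) :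
    IsBlowUp c₁ c₂ (blowUp c₁ c₂) := fun _ _ _ => rfl

namespace IsBlowUp

variable {c₁ : Sym2 V → C₁} {c₂ : Sym2 W → C₂} {c : Sym2 (V × W) → C₁ ⊕ C₂}

theorem apply_of_fst_eq (hc : IsBlowUp c₁ c₂ c) {p q : V × W} (hpq : p ≠ q) (h : p.1 = q.1) :
    c s(p, q) = Sum.inr (c₂ s(p.2, q.2)) := by
  rw [hc p q hpq, if_pos h]

theorem apply_of_fst_ne (hc : IsBlowUp c₁ c₂ c) {p q : V × W} (h : p.1 ≠ q.1) :
    c s(p, q) = Sum.inl (c₁ s(p.1, q.1)) := by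
  rw [hc p q (ne_of_apply_ne Prod.fst h), if_neg h]

theorem monoCliqueFree (hc : IsBlowUp c₁ c₂ c) {t : ℕ} (h₁ : MonoCliqueFree c₁ t)
    (h₂ : MonoCliqueFree c₂ t) : MonoCliqueFree c t := by
  classical
  intro S hS hM
  by_cases hblock : ∀ a ∈ S, ∀ b ∈ S, a.1 = b.1
  · refine h₂ _ ((card_image_snd_of_forall_fst_eq hblock).trans hS)
      (hM.image (f := Prod.snd) Sum.inr_injective ?_)
    exact fun a ha b hb hab => hc.apply_of_fst_eq hab (hblock a ha b hb)
  push Not at hblock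
  obtain ⟨p, hp, q, hq, hpq⟩ := hblock
  -- an edge inside a block would get a color of `c₂`, while `s(p, q)` gets one of `c₁`
  have hinj : Set.InjOn Prod.fst (S : Set (V × W)) := by
    intro a ha b hb hab
    by_contra hne
    have := hM a ha b hb p hp q hq hne (ne_of_apply_ne Prod.fst hpq)
    rw [hc.apply_of_fst_eq hne hab, hc.apply_of_fst_ne hpq] at this
    exact Sum.inr_ne_inl this
  refine h₁ _ ((card_image_of_injOn hinj).trans hS)
    (hM.image (f := Prod.fst) Sum.inl_injective ?_)
  exact fun a ha b hb hab => hc.apply_of_fst_ne fun h => hab (hinj ha hb h)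

theorem isGallaiColoring (hc : IsBlowUp c₁ c₂ c) (h₁ : IsGallaiColoring c₁)
    (h₂ : IsGallaiColoring c₂) : IsGallaiColoring c := by
  classical
  intro S hS hR
  by_cases hblock : ∀ a ∈ S, ∀ b ∈ S, a.1 = b.1
  · refine h₂ _ ((card_image_snd_of_forall_fst_eq hblock).trans hS)
      (hR.image (f := Prod.snd) (j := Sum.inr) ?_)
    exact fun a ha b hb hab => hc.apply_of_fst_eq hab (hblock a ha b hb)
  by_cases hinj : Set.InjOn Prod.fst (S : Set (V × W))
  · refine h₁ _ ((card_image_of_injOn hinj).trans hS)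
      (hR.image (f := Prod.fst) (j := Sum.inl) ?_)
    exact fun a ha b hb hab => hc.apply_of_fst_ne fun h => hab (hinj ha hb h)
  -- two vertices `a, b` share a block and a third vertex `d` lies outside it,
  -- so both edges from `d` get the color of `s(a.1, d.1)` under `c₁`
  push Not at hblock
  obtain ⟨x, hx, y, hy, hxy⟩ := hblock
  obtain ⟨a, ha, b, hb, hab₁, hab⟩ : ∃ a ∈ S, ∃ b ∈ S, a.1 = b.1 ∧ a ≠ b := by
    simpa [Set.InjOn] using hinj
  obtain ⟨d, hd, had⟩ : ∃ d ∈ S, a.1 ≠ d.1 := by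
    by_contra! h
    exact hxy ((h x hx).symm.trans (h y hy))
  have hbd : b.1 ≠ d.1 := hab₁ ▸ had
  refine hR.apply_ne ha hb hd hab (ne_of_apply_ne Prod.fst had) (ne_of_apply_ne Prod.fst hbd) ?_
  rw [hc.apply_of_fst_ne had, hc.apply_of_fst_ne hbd, hab₁]

theorem isGallaiColoring_and_monoCliqueFree {c₁ : Sym2 V → Fin 2}
    {c : Sym2 (V × W) → Fin 2 ⊕ C₂} (hc : IsBlowUp c₁ c₂ c) {t : ℕ} (h₁ : MonoCliqueFree c₁ t)
    (h₂ : IsGallaiColoring c₂) (h₃ : MonoCliqueFree c₂ t) :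
    IsGallaiColoring c ∧ MonoCliqueFree c t :=
  ⟨hc.isGallaiColoring (isGallaiColoring_of_card_le_two (by simp) c₁) h₂, hc.monoCliqueFree h₁ h₃⟩

end IsBlowUp

end BlowUp

-- Stated multiplicatively to avoid truncated subtraction in the exponent `card α - #E`.
theorem card_filter_forall_mem_eq_mul_pow {α β : Type*} [Fintype α] [DecidableEq α] [Fintype β]
    [DecidableEq β] (E : Finset α) (b : β) :
    #{f : α → β | ∀ a ∈ E, f a = b} * Fintype.card β ^ #E = Fintype.card β ^ Fintype.card α := by
  have hfilter : ({f : α → β | ∀ a ∈ E, f a = b} : Finset (α → β)) =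
      Fintype.piFinset fun a => if a ∈ E then {b} else univ := by
    ext f
    simp only [mem_filter, mem_univ, true_and, Fintype.mem_piFinset]
    refine ⟨fun h a => ?_, fun h a ha => by simpa [ha] using h a⟩
    split_ifs with ha <;> simp [h a, ha]
  have hpow : Fintype.card β ^ #E = ∏ a, if a ∈ E then Fintype.card β else 1 := by
    rw [prod_ite_mem, univ_inter, prod_const]
  rw [hfilter, Fintype.card_piFinset, hpow, ← prod_mul_distrib, ← card_univ (α := α),
    ← prod_const]
  refine prod_congr rfl fun a _ => ?_
  split_ifs <;> simp

theorem IsMonochromatic.exists_isMonoInColor {V C : Type*} [Nonempty C] {c : Sym2 V → C}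
    {S : Finset V} (h : IsMonochromatic c S) : ∃ i, IsMonoInColor c i S := by
  by_cases hS : ∃ a ∈ S, ∃ b ∈ S, a ≠ b
  · obtain ⟨a, ha, b, hb, hab⟩ := hS
    exact ⟨c s(a, b), fun x hx y hy hxy => h x hx y hy a ha b hb hxy hab⟩
  · push Not at hS
    exact ⟨Classical.arbitrary C, fun x hx y hy hxy => absurd (hS x hx y hy) hxy⟩

theorem IsMonoInColor.forall_mem_edges {V C : Type*} [DecidableEq V] {c : Sym2 V → C} {i : C}
    {S : Finset V} (h : IsMonoInColor c i S) : ∀ e ∈ S.offDiag.image Sym2.mk.uncurry, c e = i := by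
  simp only [mem_image, mem_offDiag, forall_exists_index, and_imp]
  rintro _ ⟨a, b⟩ ha hb hab rfl
  exact h a ha b hb hab

theorem exists_two_coloring_monoCliqueFree {V : Type*} [Fintype V] [DecidableEq V] {t : ℕ}
    (h : 2 * (Fintype.card V).choose t < 2 ^ t.choose 2) :
    ∃ c : Sym2 V → Fin 2, MonoCliqueFree c t := by
  set edges : Finset V → Finset (Sym2 V) := fun S => S.offDiag.image Sym2.mk.uncurry
  set bad : Finset V → Fin 2 → Finset (Sym2 V → Fin 2) :=
    fun S i => {c | ∀ e ∈ edges S, c e = i}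
  have hbad : ∀ S ∈ powersetCard t univ, ∀ i,
      #(bad S i) * 2 ^ t.choose 2 = 2 ^ Fintype.card (Sym2 V) := by
    intro S hS i
    rw [← (mem_powersetCard.mp hS).2, ← Sym2.card_image_offDiag]
    simpa using card_filter_forall_mem_eq_mul_pow (edges S) i
  set B := (powersetCard t univ).biUnion fun S => univ.biUnion (bad S)
  have hB : #B < 2 ^ Fintype.card (Sym2 V) := by
    refine lt_of_mul_lt_mul_right (a := 2 ^ t.choose 2) ?_ (Nat.zero_le _)
    calc #B * 2 ^ t.choose 2
        ≤ (∑ S ∈ powersetCard t univ, ∑ i, #(bad S i)) * 2 ^ t.choose 2 := by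
          gcongr
          exact card_biUnion_le.trans (sum_le_sum fun S _ => card_biUnion_le)
      _ = ∑ S ∈ powersetCard t univ, ∑ i, #(bad S i) * 2 ^ t.choose 2 := by simp only [sum_mul]
      _ = ∑ S ∈ powersetCard t univ, ∑ i : Fin 2, 2 ^ Fintype.card (Sym2 V) :=
          sum_congr rfl fun S hS => sum_congr rfl fun i _ => hbad S hS i
      _ = (Fintype.card V).choose t * 2 * 2 ^ Fintype.card (Sym2 V) := by simp [mul_assoc]
      _ < 2 ^ t.choose 2 * 2 ^ Fintype.card (Sym2 V) := by gcongr; omega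
      _ = 2 ^ Fintype.card (Sym2 V) * 2 ^ t.choose 2 := mul_comm _ _
  obtain ⟨c, hc⟩ : ∃ c, c ∉ B := by
    by_contra! hall
    rw [eq_univ_of_forall hall, card_univ, Fintype.card_fun, Fintype.card_fin] at hB
    exact lt_irrefl _ hB
  refine ⟨c, fun S hS hM => hc ?_⟩
  obtain ⟨i, hi⟩ := hM.exists_isMonoInColor
  simp only [B, mem_biUnion]
  exact ⟨S, mem_powersetCard.mpr ⟨subset_univ S, hS⟩, i, mem_univ i,
    mem_filter.mpr ⟨mem_univ c, hi.forall_mem_edges⟩⟩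

theorem two_pow_lt_factorial {n : ℕ} (hn : 4 ≤ n) : 2 ^ n < n.factorial := by
  induction n, hn using Nat.le_induction with
  | base => decide
  | succ n hn ih =>
    rw [pow_succ, Nat.factorial_succ]
    nlinarith

theorem two_mul_three_pow_lt_two_pow_mul_factorial {n : ℕ} (hn : 4 ≤ n) :
    2 * 3 ^ n < 2 ^ n * n.factorial := by
  induction n, hn using Nat.le_induction with
  | base => decide
  | succ n hn ih =>
    calc 2 * 3 ^ (n + 1) = 3 * (2 * 3 ^ n) := by ring
      _ < 3 * (2 ^ n * n.factorial) := by gcongr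
      _ ≤ 2 * (n + 1) * (2 ^ n * n.factorial) := by gcongr; omega
      _ = 2 ^ (n + 1) * (n + 1).factorial := by rw [Nat.factorial_succ]; ring

theorem two_mul_choose_lt_of_two_mul_pow_lt {m t : ℕ}
    (h : 2 * m ^ t < t.factorial * 2 ^ t.choose 2) : 2 * m.choose t < 2 ^ t.choose 2 := by
  refine lt_of_mul_lt_mul_left (a := t.factorial) (lt_of_le_of_lt ?_ h) (Nat.zero_le _)
  rw [mul_left_comm, ← Nat.descFactorial_eq_factorial_mul_choose]
  exact Nat.mul_le_mul_left 2 (Nat.descFactorial_le_pow m t)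

theorem exists_two_pow_le_sq_and_two_mul_choose_lt {t : ℕ} (ht : 3 ≤ t) :
    ∃ m : ℕ, 2 ^ t ≤ m ^ 2 ∧ 2 * m.choose t < 2 ^ t.choose 2 := by
  obtain ⟨k, rfl | rfl⟩ := Nat.even_or_odd' t
  · obtain ⟨s, rfl⟩ : ∃ s, k = s + 2 := ⟨k - 2, by omega⟩
    refine ⟨2 ^ (s + 2), (by rw [← pow_mul, mul_comm]), two_mul_choose_lt_of_two_mul_pow_lt ?_⟩
    have hchoose : (2 * (s + 2)).choose 2 = (s + 2) * (2 * s + 3) := by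
      rw [Nat.choose_two_right]
      exact Nat.div_eq_of_eq_mul_left two_pos
        (by rw [show 2 * (s + 2) - 1 = 2 * s + 3 by omega]; ring)
    rw [hchoose]
    calc 2 * (2 ^ (s + 2)) ^ (2 * (s + 2)) = 2 ^ (s + 3) * 2 ^ ((s + 2) * (2 * s + 3)) := by
          rw [← pow_mul, ← pow_succ', ← pow_add]; ring_nf
      _ < (2 * (s + 2)).factorial * 2 ^ ((s + 2) * (2 * s + 3)) := by
        gcongr
        calc 2 ^ (s + 3) ≤ 2 ^ (2 * (s + 2)) := Nat.pow_le_pow_right two_pos (by omega)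
          _ < _ := two_pow_lt_factorial (by omega)
  · rcases Nat.lt_or_ge k 2 with hk | hk
    · obtain rfl : k = 1 := by omega
      exact ⟨3, by decide, by decide⟩
    obtain ⟨s, rfl⟩ : ∃ s, k = s + 2 := ⟨k - 2, by omega⟩
    refine ⟨3 * 2 ^ (s + 1), ?_, two_mul_choose_lt_of_two_mul_pow_lt ?_⟩
    · rw [mul_pow, ← pow_mul, show 2 * (s + 2) + 1 = (s + 1) * 2 + 3 by ring, pow_add, mul_comm]
      exact Nat.mul_le_mul_right _ (by norm_num : 2 ^ 3 ≤ 3 ^ 2)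
    have hchoose : (2 * (s + 2) + 1).choose 2 = (2 * s + 5) * (s + 2) := by
      rw [Nat.choose_two_right]
      exact Nat.div_eq_of_eq_mul_left two_pos (by rw [Nat.add_sub_cancel]; ring)
    rw [hchoose, show 2 * (s + 2) + 1 = 2 * s + 5 by ring]
    calc 2 * (3 * 2 ^ (s + 1)) ^ (2 * s + 5)
        = 2 * 3 ^ (2 * s + 5) * 2 ^ ((2 * s + 5) * (s + 1)) := by
          rw [mul_pow, ← pow_mul, mul_comm (s + 1), mul_assoc]
      _ < 2 ^ (2 * s + 5) * (2 * s + 5).factorial * 2 ^ ((2 * s + 5) * (s + 1)) :=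
        mul_lt_mul_of_pos_right (two_mul_three_pow_lt_two_pow_mul_factorial (by omega))
          (by positivity)
      _ = (2 * s + 5).factorial * 2 ^ ((2 * s + 5) * (s + 2)) := by
          rw [mul_comm (2 ^ _), mul_assoc, ← pow_add]; ring_nf

theorem two_rpow_half_le_of_two_pow_le_sq {t m : ℕ} (h : 2 ^ t ≤ m ^ 2) :
    (2 : ℝ) ^ ((t : ℝ) / 2) ≤ m := by
  rw [← pow_le_pow_iff_left₀ (by positivity) (Nat.cast_nonneg m) two_ne_zero,
    ← Real.rpow_natCast, ← Real.rpow_mul zero_le_two]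
  simpa using (Nat.cast_le (α := ℝ)).mpr h

-- `M(k, t, 3)` is the least `n` with `ForcesMonoOrRainbow k t n`.
def ForcesMonoOrRainbow (k t n : ℕ) : Prop :=
  ∀ c : Sym2 (Fin n) → Fin k,
    (∃ S : Finset (Fin n), S.card = t ∧ IsMonochromatic c S) ∨
    (∃ S : Finset (Fin n), S.card = 3 ∧ IsRainbow c S)

namespace ForcesMonoOrRainbow

variable {k t M : ℕ}

theorem pos (ht : t ≠ 0) (hM : ForcesMonoOrRainbow k t M) : 0 < M := by
  refine Nat.pos_of_ne_zero fun hM0 => ?_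
  subst hM0
  rcases hM isEmptyElim with ⟨S, hS, -⟩ | ⟨S, hS, -⟩
  · exact ht (by simpa [S.eq_empty_of_isEmpty] using hS.symm)
  · simp [S.eq_empty_of_isEmpty] at hS

theorem card_lt {V C : Type*} [Fintype V] [DecidableEq V] (hM : ForcesMonoOrRainbow k t M)
    {c : Sym2 V → C} (j : C ↪ Fin k) (h₁ : MonoCliqueFree c t) (h₂ : IsGallaiColoring c) :
    Fintype.card V < M := by
  by_contra! hle
  obtain ⟨f⟩ := Function.Embedding.nonempty_of_card_le (α := Fin M) (β := V) (by simpa using hle)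
  rcases hM fun e => j (c (e.map f)) with ⟨S, hS, hmono⟩ | ⟨S, hS, hrainbow⟩
  · exact h₁.comap f j S hS hmono
  · exact h₂.comap f j S hS hrainbow

theorem exists_of_lt_of_isLeast {n : ℕ} (hM : IsLeast {n | ForcesMonoOrRainbow k t n} M)
    (hn : n < M) : ∃ c : Sym2 (Fin n) → Fin k, MonoCliqueFree c t ∧ IsGallaiColoring c := by
  obtain ⟨c, hc⟩ := not_forall.mp fun h => (hM.2 h).not_gt hn
  exact ⟨c, fun S hS hmono => hc (Or.inl ⟨S, hS, hmono⟩),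
    fun S hS hrainbow => hc (Or.inr ⟨S, hS, hrainbow⟩)⟩

end ForcesMonoOrRainbow

/-- For `k ≥ 2` and `t ≥ 3`, `M(k,t,3) − 1 ≥ 2^(t/2) (M(k−2,t,3) − 1)`.  More precisely,
given a `2`-edge-coloring of `K_m` with no monochromatic `K_t`, and a `(k−2)`-edge-coloring
of `K_r` with no rainbow triangle and no monochromatic `K_t`, the blow-up coloring of
`K_{m·r}` (edges between blocks `i ≠ j` get the first coloring's color of `(i,j)`, taken
from `2` new colors, and edges inside each block are colored by the second coloring) is a
`k`-edge-coloring with no rainbow triangle and no monochromatic `K_t`. -/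
theorem M_recursive_lower_bound
    (k t : ℕ) (hk : 2 ≤ k) (ht : 3 ≤ t) (Mk Mk' : ℕ)
    (hMk : IsLeast {n : ℕ | ∀ c : Sym2 (Fin n) → Fin k,
        (∃ S : Finset (Fin n), S.card = t ∧ IsMonochromatic c S) ∨
        (∃ S : Finset (Fin n), S.card = 3 ∧ IsRainbow c S)} Mk)
    (hMk' : IsLeast {n : ℕ | ∀ c : Sym2 (Fin n) → Fin (k - 2),
        (∃ S : Finset (Fin n), S.card = t ∧ IsMonochromatic c S) ∨
        (∃ S : Finset (Fin n), S.card = 3 ∧ IsRainbow c S)} Mk') :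
    (2 : ℝ) ^ ((t : ℝ) / 2) * ((Mk' : ℝ) - 1) ≤ (Mk : ℝ) - 1 ∧
    ∀ (m r : ℕ) (c₁ : Sym2 (Fin m) → Fin 2) (c₂ : Sym2 (Fin r) → Fin (k - 2)),
      (∀ S : Finset (Fin m), S.card = t → ¬ IsMonochromatic c₁ S) →
      (∀ S : Finset (Fin r), S.card = 3 → ¬ IsRainbow c₂ S) →
      (∀ S : Finset (Fin r), S.card = t → ¬ IsMonochromatic c₂ S) →
      ∀ c₃ : Sym2 (Fin m × Fin r) → (Fin 2 ⊕ Fin (k - 2)),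
        (∀ p q : Fin m × Fin r, p ≠ q →
            c₃ s(p, q) = if p.1 = q.1 then Sum.inr (c₂ s(p.2, q.2))
              else Sum.inl (c₁ s(p.1, q.1))) →
        (∀ S : Finset (Fin m × Fin r), S.card = 3 → ¬ IsRainbow c₃ S) ∧
        (∀ S : Finset (Fin m × Fin r), S.card = t → ¬ IsMonochromatic c₃ S) := by
  refine ⟨?_, fun m r c₁ c₂ h₁ h₂ h₃ c₃ hc₃ =>
    IsBlowUp.isGallaiColoring_and_monoCliqueFree hc₃ h₁ h₂ h₃⟩
  obtain ⟨m, hm, hchoose⟩ := exists_two_pow_le_sq_and_two_mul_choose_lt ht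
  obtain ⟨c₁, hc₁⟩ := exists_two_coloring_monoCliqueFree (V := Fin m) (by simpa using hchoose)
  have hMk'_pos : 0 < Mk' := ForcesMonoOrRainbow.pos (by omega) hMk'.1
  obtain ⟨c₂, hc₂mono, hc₂gallai⟩ :=
    ForcesMonoOrRainbow.exists_of_lt_of_isLeast hMk' (Nat.sub_one_lt_of_lt hMk'_pos)
  obtain ⟨hgallai, hmono⟩ :=
    (isBlowUp_blowUp c₁ c₂).isGallaiColoring_and_monoCliqueFree hc₁ hc₂gallai hc₂mono
  have hlt : m * (Mk' - 1) < Mk := by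
    simpa using ForcesMonoOrRainbow.card_lt hMk.1
      (finSumFinEquiv.trans (finCongr (by omega))).toEmbedding hmono hgallai
  have hlt' : (m : ℝ) * ((Mk' : ℝ) - 1) + 1 ≤ Mk := by
    have h := (Nat.cast_le (α := ℝ)).mpr (Nat.succ_le_of_lt hlt)
    push_cast [Nat.cast_sub hMk'_pos] at h
    exact h
  calc (2 : ℝ) ^ ((t : ℝ) / 2) * ((Mk' : ℝ) - 1) ≤ m * ((Mk' : ℝ) - 1) := by
        gcongr
        · exact sub_nonneg.mpr (Nat.one_le_cast.mpr hMk'_pos)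
        · exact two_rpow_half_le_of_two_pow_le_sq hm
    _ ≤ Mk - 1 := by linarith
end

section
/- In any edge-coloring of the complete graph K_n in which d_i(x) ≤ δn for every vertex x and color i, the number of copies of K_t containing two vertex-disjoint edges of the same color (within the copy) is at most (1/8)·δ·t^4·C(n,t). -/
open Finset

/-! Count the ordered quadruples `(a, b, x, y)` of distinct vertices with `c(ab) = c(xy)`: once
`a, b, x` are fixed there are at most `d_{c(ab)}(x) ≤ δn` choices of `y`, so there are at most
`δn⁴` quadruples. Each lies in at most `C(n-4, t-4)` copies of `K_t`, while a copy containing a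
monochromatic matching contains at least 8 of them, one per symmetry of the matching. Double
counting and `n⁴ C(n-4, t-4) ≤ t⁴ C(n, t)` give the bound. -/

namespace Nat

theorem descFactorial_mul_choose_sub {n k t : ℕ} (hkt : k ≤ t) :
    n.descFactorial k * (n - k).choose (t - k) = t.descFactorial k * n.choose t := by
  rw [descFactorial_eq_factorial_mul_choose, descFactorial_eq_factorial_mul_choose, mul_assoc,
    ← choose_mul hkt]
  ring

theorem pow_mul_descFactorial_le {n t : ℕ} (htn : t ≤ n) (k : ℕ) :
    n ^ k * t.descFactorial k ≤ t ^ k * n.descFactorial k := by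
  induction k with
  | zero => simp
  | succ k ih =>
    have hstep : n * (t - k) ≤ t * (n - k) := by
      rw [Nat.mul_sub, Nat.mul_sub, Nat.mul_comm t n]
      exact Nat.sub_le_sub_left (Nat.mul_le_mul_right k htn) _
    rw [descFactorial_succ, descFactorial_succ]
    calc n ^ (k + 1) * ((t - k) * t.descFactorial k)
        = (n * (t - k)) * (n ^ k * t.descFactorial k) := by ring
      _ ≤ (t * (n - k)) * (t ^ k * n.descFactorial k) := Nat.mul_le_mul hstep ih
      _ = t ^ (k + 1) * ((n - k) * n.descFactorial k) := by ring

theorem pow_mul_choose_sub_le {n k t : ℕ} (hkt : k ≤ t) (hkn : k ≤ n) :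
    n ^ k * (n - k).choose (t - k) ≤ t ^ k * n.choose t := by
  rcases le_or_gt t n with htn | hnt
  · refine Nat.le_of_mul_le_mul_left ?_ (descFactorial_pos.2 hkn)
    calc n.descFactorial k * (n ^ k * (n - k).choose (t - k))
        = n ^ k * t.descFactorial k * n.choose t := by
          rw [mul_left_comm, descFactorial_mul_choose_sub hkt, mul_assoc]
      _ ≤ t ^ k * n.descFactorial k * n.choose t := by
          exact Nat.mul_le_mul_right _ (pow_mul_descFactorial_le htn k)
      _ = n.descFactorial k * (t ^ k * n.choose t) := by ring
  · rw [choose_eq_zero_of_lt (by omega : n - k < t - k)]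
    simp

end Nat

theorem Finset.card_powersetCard_supersets_le {α : Type*} [Fintype α] [DecidableEq α]
    (T : Finset α) (t : ℕ) :
    #{S ∈ powersetCard t univ | T ⊆ S} ≤ (Fintype.card α - #T).choose (t - #T) := by
  rw [← card_compl, ← card_powersetCard]
  refine (card_le_card fun S hS => ?_).trans (card_image_le (f := (· ∪ T)))
  obtain ⟨hS, hTS⟩ := mem_filter.1 hS
  refine mem_image.2 ⟨S \ T, mem_powersetCard.2 ⟨?_, ?_⟩, sdiff_union_of_subset hTS⟩
  · exact sdiff_subset_sdiff (subset_univ _) le_rfl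
  · rw [card_sdiff_of_subset hTS, (mem_powersetCard.1 hS).2]

def matchingSymmetries : Finset (Equiv.Perm (Fin 4)) :=
  univ.filter fun σ => (s(σ 0, σ 1) = s(0, 1) ∧ s(σ 2, σ 3) = s(2, 3)) ∨
    (s(σ 0, σ 1) = s(2, 3) ∧ s(σ 2, σ 3) = s(0, 1))

theorem card_matchingSymmetries : #matchingSymmetries = 8 := by decide

section MonoMatchings

variable {V C : Type*} [Fintype V] [DecidableEq V] [DecidableEq C] (c : Sym2 V → C)

def monoMatchings : Finset (Fin 4 → V) :=
  univ.filter fun q => q.Injective ∧ c s(q 0, q 1) = c s(q 2, q 3)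

variable {c}

theorem mem_monoMatchings {q : Fin 4 → V} :
    q ∈ monoMatchings c ↔ q.Injective ∧ c s(q 0, q 1) = c s(q 2, q 3) := by
  simp [monoMatchings]

theorem comp_mem_monoMatchings {q : Fin 4 → V} (hq : q ∈ monoMatchings c)
    {σ : Equiv.Perm (Fin 4)} (hσ : σ ∈ matchingSymmetries) : q ∘ σ ∈ monoMatchings c := by
  obtain ⟨hinj, hcol⟩ := mem_monoMatchings.1 hq
  refine mem_monoMatchings.2 ⟨hinj.comp σ.injective, ?_⟩
  have hmap : ∀ i j, s((q ∘ σ) i, (q ∘ σ) j) = s(σ i, σ j).map q := fun _ _ => rfl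
  rw [hmap, hmap]
  rcases (mem_filter.1 hσ).2 with ⟨h01, h23⟩ | ⟨h01, h23⟩ <;>
    simp only [h01, h23, Sym2.map_mk, hcol]

theorem eight_le_card_filter_monoMatchings {q : Fin 4 → V} (hq : q ∈ monoMatchings c)
    {S : Finset V} (hqS : ∀ i, q i ∈ S) :
    8 ≤ #{q' ∈ monoMatchings c | ∀ i, q' i ∈ S} := by
  have hinj : Function.Injective fun σ : Equiv.Perm (Fin 4) => q ∘ σ := fun σ τ h =>
    Equiv.ext fun i => (mem_monoMatchings.1 hq).1 (congrFun h i)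
  calc 8 = #(matchingSymmetries.image fun σ : Equiv.Perm (Fin 4) => q ∘ σ) := by
        rw [card_image_of_injective _ hinj, card_matchingSymmetries]
    _ ≤ _ := card_le_card fun q' hq' => by
        obtain ⟨σ, hσ, rfl⟩ := mem_image.1 hq'
        exact mem_filter.2 ⟨comp_mem_monoMatchings hq hσ, fun i => hqS (σ i)⟩

theorem card_monoMatchings_le {D : ℝ} (hD : ∀ x i, (colorDeg c i x : ℝ) ≤ D) :
    (#(monoMatchings c) : ℝ) ≤ Fintype.card V ^ 3 * D := by
  have hfiber : ∀ p : V × V × V,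
      #{q ∈ monoMatchings c | (q 0, q 1, q 2) = p} ≤ colorDeg c (c s(p.1, p.2.1)) p.2.2 := by
    rintro ⟨a, b, x⟩
    refine card_le_card_of_injOn (· 3) (fun q hq => ?_) fun q₁ hq₁ q₂ hq₂ h => ?_
    · obtain ⟨hq, hqp⟩ := mem_filter.1 hq
      obtain ⟨hinj, hcol⟩ := mem_monoMatchings.1 hq
      simp only [Prod.mk.injEq] at hqp
      obtain ⟨rfl, rfl, rfl⟩ := hqp
      exact mem_filter.2 ⟨mem_univ _, hinj.ne (by decide), hcol.symm⟩
    · have h₁ := (mem_filter.1 hq₁).2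
      have h₂ := (mem_filter.1 hq₂).2
      simp only [Prod.mk.injEq] at h₁ h₂
      funext i
      fin_cases i
      exacts [h₁.1.trans h₂.1.symm, h₁.2.1.trans h₂.2.1.symm, h₁.2.2.trans h₂.2.2.symm, h]
  rw [card_eq_sum_card_fiberwise (f := fun q => (q 0, q 1, q 2)) (t := univ)
    fun _ _ => mem_coe.2 (mem_univ _)]
  push_cast
  calc ∑ p : V × V × V, (#{q ∈ monoMatchings c | (q 0, q 1, q 2) = p} : ℝ)
      ≤ ∑ _p : V × V × V, D :=
        sum_le_sum fun p _ => (Nat.cast_le.2 (hfiber p)).trans (hD _ _)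
    _ = Fintype.card V ^ 3 * D := by simp [pow_succ, mul_assoc]

theorem vecCons_mem_monoMatchings {a b x y : V} (hab : a ≠ b) (hxy : x ≠ y) (hax : a ≠ x)
    (hay : a ≠ y) (hbx : b ≠ x) (hby : b ≠ y) (hcol : c s(a, b) = c s(x, y)) :
    ![a, b, x, y] ∈ monoMatchings c := by
  refine mem_monoMatchings.2 ⟨fun i j hij => ?_, hcol⟩
  fin_cases i <;> fin_cases j <;> simp_all [eq_comm]

theorem card_image_of_mem_monoMatchings {q : Fin 4 → V} (hq : q ∈ monoMatchings c) :
    #(univ.image q) = 4 := by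
  rw [card_image_of_injective _ (mem_monoMatchings.1 hq).1, card_univ, Fintype.card_fin]

theorem card_mul_eight_le {B : Finset (Finset V)} {t : ℕ}
    (hB : ∀ S ∈ B, #S = t ∧ ∃ q ∈ monoMatchings c, ∀ i, q i ∈ S) :
    #B * 8 ≤ #(monoMatchings c) * (Fintype.card V - 4).choose (t - 4) := by
  refine card_mul_le_card_mul (fun S q => ∀ i, q i ∈ S) (fun S hS => ?_) fun q hq => ?_
  · obtain ⟨-, q, hq, hqS⟩ := hB S hS
    exact eight_le_card_filter_monoMatchings hq hqS
  · refine le_trans (card_le_card fun S hS => ?_)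
      (card_image_of_mem_monoMatchings hq ▸ card_powersetCard_supersets_le (univ.image q) t)
    obtain ⟨hS, hqS⟩ := mem_filter.1 hS
    exact mem_filter.2 ⟨mem_powersetCard.2 ⟨subset_univ _, (hB S hS).1⟩,
      image_subset_iff.2 fun i _ => hqS i⟩

theorem card_le_of_forall_exists_monoMatching {B : Finset (Finset V)} {t : ℕ} {δ : ℝ}
    (hδ : 0 ≤ δ) (hdeg : ∀ x i, (colorDeg c i x : ℝ) ≤ δ * Fintype.card V)
    (hB : ∀ S ∈ B, #S = t ∧ ∃ q ∈ monoMatchings c, ∀ i, q i ∈ S) :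
    (#B : ℝ) ≤ 1 / 8 * δ * t ^ 4 * (Fintype.card V).choose t := by
  rcases B.eq_empty_or_nonempty with rfl | ⟨S, hS⟩
  · simp only [card_empty, Nat.cast_zero]
    positivity
  obtain ⟨hSt, q, hq, hqS⟩ := hB S hS
  have h4t : 4 ≤ t := hSt ▸ card_image_of_mem_monoMatchings hq ▸
    card_le_card (image_subset_iff.2 fun i _ => hqS i)
  have h4V : 4 ≤ Fintype.card V := card_image_of_mem_monoMatchings hq ▸ card_le_univ _
  have hdouble : (#B : ℝ) * 8 ≤ #(monoMatchings c) * (Fintype.card V - 4).choose (t - 4) := by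
    exact_mod_cast card_mul_eight_le hB
  have hchoose : (Fintype.card V ^ 4 * (Fintype.card V - 4).choose (t - 4) : ℝ)
      ≤ t ^ 4 * (Fintype.card V).choose t := by
    exact_mod_cast Nat.pow_mul_choose_sub_le h4t h4V
  have hQ := card_monoMatchings_le hdeg
  calc (#B : ℝ) ≤ #(monoMatchings c) * (Fintype.card V - 4).choose (t - 4) / 8 := by linarith
    _ ≤ Fintype.card V ^ 3 * (δ * Fintype.card V) * (Fintype.card V - 4).choose (t - 4) / 8 := by
        gcongr
    _ = 1 / 8 * δ * (Fintype.card V ^ 4 * (Fintype.card V - 4).choose (t - 4)) := by ring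
    _ ≤ 1 / 8 * δ * (t ^ 4 * (Fintype.card V).choose t) := by gcongr
    _ = 1 / 8 * δ * t ^ 4 * (Fintype.card V).choose t := by ring

end MonoMatchings

/-- If `d_i(x) ≤ δ n` for every vertex `x` and color `i`, then the number of copies of
`K_t` containing two vertex-disjoint edges of the same color (a matching of size two in
some color) is at most `(1/8) δ t⁴ C(n,t)`. -/
theorem few_cliques_with_monochromatic_matching
    (n t : ℕ) {C : Type*} [DecidableEq C] (c : Sym2 (Fin n) → C)
    (δ : ℝ) (hδ : 0 < δ)
    (hdeg : ∀ (x : Fin n) (i : C), (colorDeg c i x : ℝ) ≤ δ * n) :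
    (((((univ : Finset (Fin n)).powersetCard t).filter fun S =>
        ∃ a ∈ S, ∃ b ∈ S, ∃ x ∈ S, ∃ y ∈ S, a ≠ b ∧ x ≠ y ∧
          a ≠ x ∧ a ≠ y ∧ b ≠ x ∧ b ≠ y ∧
          c s(a, b) = c s(x, y)).card : ℝ))
      ≤ 1 / 8 * δ * t ^ 4 * (n.choose t) := by
  have hdeg' : ∀ x i, (colorDeg c i x : ℝ) ≤ δ * Fintype.card (Fin n) := by simpa using hdeg
  refine (card_le_of_forall_exists_monoMatching (t := t) hδ.le hdeg' fun S hS => ?_).trans_eq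
    (by rw [Fintype.card_fin])
  obtain ⟨hSt, a, ha, b, hb, x, hx, y, hy, hab, hxy, hax, hay, hbx, hby, hcol⟩ := mem_filter.1 hS
  refine ⟨(mem_powersetCard.1 hSt).2, _, vecCons_mem_monoMatchings hab hxy hax hay hbx hby hcol, ?_⟩
  intro i
  fin_cases i <;> assumption
end
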